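/- Let n and m_n be positive integers with 2·m_n ≤ n, let W : {−m_n,…,m_n} → ℝ satisfy W(m) ≥ 0 and ∑_{|m|≤m_n} W(m) = 1, and let K : {−m_n,…,m_n} → ℝ. Set W* = max_{|m|≤m_n} W(m) and K* = max_{|m|≤m_n} |K(m)|. Then ∑_{j₁=1}^{n} ∑_{j₂=1}^{n} |∑_{|m|≤m_n} W(m)·K(m)·e^{i(j₁−j₂)m/n}|² ≤ C·W*·(K*·n)² for an absolute constant C (e.g. C = 1 + 8L⁻²·π²/6 where L is such that |e^{ix}−1| ≥ L|x| on [0,1]). -/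

import Mathlib

/-!
Expanding the square and summing over `j₁, j₂` first turns the left side into the Toeplitz form
`∑_{m,m'} a_m a_{m'} |∑_{j=1}^n e^{ij(m-m')/n}|²` with `a_m = W(m) K(m)`. The diagonal contributes
at most `W* K*² n²`. Off the diagonal, `|m - m'| ≤ 2 m_n ≤ n`, so the geometric sum is at most
`2 / |e^{i(m-m')/n} - 1| ≤ π n / |m - m'|` by Jordan's inequality `sin x ≥ 2x/π`; together with
`∑_{k ≠ 0} k⁻² = π²/3` this gives `C = 1 + π⁴/3`.
-/

open Finset Complex
open scoped Real

theorem two_div_pi_mul_abs_le_norm_exp_mul_I_sub_one {x : ℝ} (hx : |x| ≤ π) :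
    2 / π * |x| ≤ ‖exp (x * I) - 1‖ := by
  have hsin : 2 / π * (|x| / 2) ≤ Real.sin (|x| / 2) :=
    Real.mul_le_sin (by positivity) (by linarith)
  have hsin_nonneg : 0 ≤ Real.sin (|x| / 2) :=
    Real.sin_nonneg_of_nonneg_of_le_pi (by positivity) (by linarith [abs_nonneg x])
  have habs : Real.sin (|x| / 2) = |Real.sin (x / 2)| := by
    rcases abs_cases x with ⟨h, _⟩ | ⟨h, _⟩ <;> rw [h] at hsin_nonneg ⊢
    · exact (abs_of_nonneg hsin_nonneg).symm
    · rw [neg_div, Real.sin_neg] at hsin_nonneg ⊢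
      exact (abs_of_nonpos (by linarith)).symm
  rw [mul_comm (x : ℂ), norm_exp_I_mul_ofReal_sub_one, norm_mul, Real.norm_eq_abs,
    Real.norm_eq_abs, ← habs, abs_two]
  linarith

theorem norm_geom_sum_le_of_norm_eq_one {z : ℂ} (hz : ‖z‖ = 1) (hz1 : z ≠ 1) (n : ℕ) :
    ‖∑ j ∈ range n, z ^ j‖ ≤ 2 / ‖z - 1‖ := by
  rw [geom_sum_eq hz1, norm_div]
  gcongr
  calc ‖z ^ n - 1‖ ≤ ‖z ^ n‖ + ‖(1 : ℂ)‖ := norm_sub_le _ _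
    _ = 2 := by rw [norm_pow, hz]; norm_num

theorem norm_sum_Icc_exp_mul_I_le {x : ℝ} (hx0 : x ≠ 0) (hx : |x| ≤ π) (n : ℕ) :
    ‖∑ j ∈ Icc 1 n, exp (↑((j : ℝ) * x) * I)‖ ≤ π / |x| := by
  set z := exp (x * I)
  have hz : ‖z‖ = 1 := norm_exp_ofReal_mul_I x
  have hz1 : 2 / π * |x| ≤ ‖z - 1‖ := two_div_pi_mul_abs_le_norm_exp_mul_I_sub_one hx
  have hx0' : 0 < 2 / π * |x| := by positivity
  have hpow : ∀ j : ℕ, exp (↑((j : ℝ) * x) * I) = z ^ j := fun j => by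
    rw [← exp_nat_mul]; push_cast; ring_nf
  have hsum : ∑ j ∈ Icc 1 n, z ^ j = z * ∑ j ∈ range n, z ^ j := by
    rw [mul_sum, ← Ico_add_one_right_eq_Icc, sum_Ico_eq_sum_range]
    simp [pow_succ', add_comm]
  calc ‖∑ j ∈ Icc 1 n, exp (↑((j : ℝ) * x) * I)‖
      = ‖∑ j ∈ range n, z ^ j‖ := by simp_rw [hpow, hsum, norm_mul, hz, one_mul]
    _ ≤ 2 / ‖z - 1‖ :=
        norm_geom_sum_le_of_norm_eq_one hz
          (fun h => by rw [h, sub_self, norm_zero] at hz1; linarith) n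
    _ ≤ 2 / (2 / π * |x|) := by gcongr
    _ = π / |x| := by field_simp

theorem norm_sum_Icc_exp_mul_I_sq_le {n : ℕ} {k : ℤ} (hk : k ≠ 0) (hkn : |k| ≤ n) :
    ‖∑ j ∈ Icc 1 n, exp (↑((j : ℝ) * (k / n)) * I)‖ ^ 2 ≤ π ^ 2 * n ^ 2 / k ^ 2 := by
  have hkR : (k : ℝ) ≠ 0 := by exact_mod_cast hk
  have hkn' : |(k : ℝ)| ≤ n := by exact_mod_cast hkn
  have hn : (0 : ℝ) < n := (abs_pos.mpr hkR).trans_le hkn'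
  have hx : |(k : ℝ) / n| ≤ π := by
    rw [abs_div, Nat.abs_cast, div_le_iff₀ hn]
    nlinarith [Real.pi_gt_three]
  calc ‖∑ j ∈ Icc 1 n, exp (↑((j : ℝ) * (k / n)) * I)‖ ^ 2
      ≤ (π / |(k : ℝ) / n|) ^ 2 := by
        gcongr
        exact norm_sum_Icc_exp_mul_I_le (by positivity) hx n
    _ = π ^ 2 * n ^ 2 / k ^ 2 := by
        rw [div_pow, sq_abs]
        field_simp

theorem ofReal_norm_sum_mul_exp_sq {κ : Type*} (s : Finset κ) (a θ : κ → ℝ) (u : ℝ) :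
    ((‖∑ m ∈ s, (a m : ℂ) * exp (↑(u * θ m) * I)‖ ^ 2 : ℝ) : ℂ)
      = ∑ m ∈ s, ∑ m' ∈ s, ((a m * a m' : ℝ) : ℂ) * exp (↑(u * (θ m - θ m')) * I) := by
  simp only [ofReal_pow, ← mul_conj', map_sum, map_mul, conj_ofReal, ← exp_conj, conj_I,
    sum_mul_sum]
  refine sum_congr rfl fun m _ => sum_congr rfl fun m' _ => ?_
  rw [mul_mul_mul_comm, ← exp_add, ofReal_mul]
  push_cast
  ring_nf

theorem sum_sum_exp_sub_mul_eq_norm_sq {ι : Type*} (J : Finset ι) (t : ι → ℝ) (φ : ℝ) :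
    ∑ j₁ ∈ J, ∑ j₂ ∈ J, exp (↑((t j₁ - t j₂) * φ) * I)
      = ((‖∑ j ∈ J, exp (↑(t j * φ) * I)‖ ^ 2 : ℝ) : ℂ) := by
  simp only [ofReal_pow, ← mul_conj', map_sum, ← exp_conj, map_mul, conj_ofReal, conj_I,
    sum_mul_sum]
  refine sum_congr rfl fun j₁ _ => sum_congr rfl fun j₂ _ => ?_
  rw [← exp_add]
  push_cast
  ring_nf

theorem sum_sum_norm_sum_mul_exp_sq {ι κ : Type*} (J : Finset ι) (s : Finset κ)
    (t : ι → ℝ) (a θ : κ → ℝ) :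
    ∑ j₁ ∈ J, ∑ j₂ ∈ J, ‖∑ m ∈ s, (a m : ℂ) * exp (↑((t j₁ - t j₂) * θ m) * I)‖ ^ 2
      = ∑ m ∈ s, ∑ m' ∈ s, a m * a m' * ‖∑ j ∈ J, exp (↑(t j * (θ m - θ m')) * I)‖ ^ 2 := by
  have hrhs : ∀ m m', ((a m * a m' * ‖∑ j ∈ J, exp (↑(t j * (θ m - θ m')) * I)‖ ^ 2 : ℝ) : ℂ)
      = ∑ j₁ ∈ J, ∑ j₂ ∈ J,
          ((a m * a m' : ℝ) : ℂ) * exp (↑((t j₁ - t j₂) * (θ m - θ m')) * I) := by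
    intro m m'
    rw [ofReal_mul, ← sum_sum_exp_sub_mul_eq_norm_sq, mul_sum]
    simp only [mul_sum]
  apply ofReal_injective
  simp only [ofReal_sum, ofReal_norm_sum_mul_exp_sq, hrhs]
  simp only [sum_comm (s := J) (t := s)]

-- The `k = 0` term is `1 / 0 = 0`.
theorem hasSum_int_one_div_sq : HasSum (fun k : ℤ => 1 / (k : ℝ) ^ 2) (π ^ 2 / 3) := by
  have hpos : HasSum (fun n : ℕ => 1 / ((n : ℤ) : ℝ) ^ 2) (π ^ 2 / 6) := by
    simpa using hasSum_zeta_two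
  have hneg : HasSum (fun n : ℕ => 1 / ((-(n + 1 : ℤ) : ℤ) : ℝ) ^ 2) (π ^ 2 / 6) := by
    simpa [-neg_add_rev, neg_sq] using (hasSum_nat_add_iff' 1).mpr hasSum_zeta_two
  convert HasSum.of_nat_of_neg_add_one (f := fun k : ℤ => 1 / (k : ℝ) ^ 2) hpos hneg using 1
  ring

theorem sum_one_div_sub_sq_le (m : ℤ) (t : Finset ℤ) :
    ∑ m' ∈ t, 1 / ((m - m' : ℤ) : ℝ) ^ 2 ≤ π ^ 2 / 3 := by
  have h : HasSum ((fun k : ℤ => 1 / (k : ℝ) ^ 2) ∘ Equiv.subLeft m) (π ^ 2 / 3) :=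
    (Equiv.subLeft m).hasSum_iff.mpr hasSum_int_one_div_sq
  exact sum_le_hasSum t (fun _ _ => by positivity) h

section ToeplitzForm

variable {s : Finset ℤ} {w G : ℤ → ℝ} {A B W : ℝ}

theorem sum_mul_toeplitz_le {m : ℤ} (hm : m ∈ s) (hw0 : ∀ m ∈ s, 0 ≤ w m)
    (hw : ∀ m ∈ s, w m ≤ W) (hG0 : ∀ k, 0 ≤ G k) (hA : G 0 ≤ A) (hB : 0 ≤ B)
    (hG : ∀ m' ∈ s, m ≠ m' → G (m - m') ≤ B / ((m - m' : ℤ) : ℝ) ^ 2) :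
    ∑ m' ∈ s, w m' * G (m - m') ≤ W * (A + B * (π ^ 2 / 3)) := by
  have hW : 0 ≤ W := (hw0 m hm).trans (hw m hm)
  have hdiag : w m * G 0 ≤ W * A := mul_le_mul (hw m hm) hA (hG0 0) hW
  have hoff : ∑ m' ∈ s.erase m, w m' * G (m - m') ≤ W * B * (π ^ 2 / 3) :=
    calc ∑ m' ∈ s.erase m, w m' * G (m - m')
        ≤ ∑ m' ∈ s.erase m, W * B * (1 / ((m - m' : ℤ) : ℝ) ^ 2) := by
          refine sum_le_sum fun m' hm' => ?_
          obtain ⟨hne, hm's⟩ := mem_erase.mp hm'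
          rw [mul_assoc, mul_one_div]
          exact mul_le_mul (hw m' hm's) (hG m' hm's hne.symm) (hG0 _) hW
      _ = W * B * ∑ m' ∈ s.erase m, 1 / ((m - m' : ℤ) : ℝ) ^ 2 := (mul_sum _ _ _).symm
      _ ≤ W * B * (π ^ 2 / 3) := by
          gcongr
          exact sum_one_div_sub_sq_le m _
  rw [← add_sum_erase s _ hm, sub_self]
  linarith

theorem sum_sum_mul_mul_toeplitz_le {a : ℤ → ℝ} (ha : ∀ m ∈ s, |a m| ≤ w m)
    (hw : ∀ m ∈ s, w m ≤ W) (hG0 : ∀ k, 0 ≤ G k) (hA : G 0 ≤ A) (hB : 0 ≤ B)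
    (hG : ∀ m ∈ s, ∀ m' ∈ s, m ≠ m' → G (m - m') ≤ B / ((m - m' : ℤ) : ℝ) ^ 2) :
    ∑ m ∈ s, ∑ m' ∈ s, a m * a m' * G (m - m') ≤ W * (A + B * (π ^ 2 / 3)) * ∑ m ∈ s, w m := by
  have hw0 : ∀ m ∈ s, 0 ≤ w m := fun m hm => (abs_nonneg _).trans (ha m hm)
  have hterm : ∀ m ∈ s, ∀ m' ∈ s, a m * a m' * G (m - m') ≤ w m * (w m' * G (m - m')) := by
    intro m hm m' hm'
    have haa : a m * a m' ≤ w m * w m' :=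
      (le_abs_self _).trans (abs_mul (a m) (a m') ▸
        mul_le_mul (ha m hm) (ha m' hm') (abs_nonneg _) (hw0 m hm))
    rw [← mul_assoc]
    exact mul_le_mul_of_nonneg_right haa (hG0 _)
  calc ∑ m ∈ s, ∑ m' ∈ s, a m * a m' * G (m - m')
      ≤ ∑ m ∈ s, w m * ∑ m' ∈ s, w m' * G (m - m') := by
        refine sum_le_sum fun m hm => ?_
        rw [mul_sum]
        exact sum_le_sum fun m' hm' => hterm m hm m' hm'
    _ ≤ ∑ m ∈ s, w m * (W * (A + B * (π ^ 2 / 3))) := by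
        refine sum_le_sum fun m hm => mul_le_mul_of_nonneg_left ?_ (hw0 m hm)
        exact sum_mul_toeplitz_le hm hw0 hw hG0 hA hB (hG m hm)
    _ = W * (A + B * (π ^ 2 / 3)) * ∑ m ∈ s, w m := by rw [← sum_mul, mul_comm]

end ToeplitzForm

theorem smoothing_double_sum_bound :
    ∃ C : ℝ, 0 < C ∧
      ∀ (n mn : ℕ), 0 < n → 0 < mn → 2 * mn ≤ n →
      ∀ (W K : ℤ → ℝ) (Wstar Kstar : ℝ),
        (∀ m ∈ Finset.Icc (-(mn : ℤ)) (mn : ℤ), 0 ≤ W m) →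
        (∑ m ∈ Finset.Icc (-(mn : ℤ)) (mn : ℤ), W m) = 1 →
        (∀ m ∈ Finset.Icc (-(mn : ℤ)) (mn : ℤ), W m ≤ Wstar) →
        (∀ m ∈ Finset.Icc (-(mn : ℤ)) (mn : ℤ), |K m| ≤ Kstar) →
        ∑ j₁ ∈ Finset.Icc 1 n, ∑ j₂ ∈ Finset.Icc 1 n,
            ‖(∑ m ∈ Finset.Icc (-(mn : ℤ)) (mn : ℤ),
              ((W m * K m : ℝ) : ℂ) *
                Complex.exp ((((j₁ : ℝ) - (j₂ : ℝ)) * (m : ℝ) / (n : ℝ)) * Complex.I))‖ ^ 2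
          ≤ C * Wstar * (Kstar * n) ^ 2 := by
  refine ⟨1 + π ^ 4 / 3, by positivity, ?_⟩
  intro n mn _ _ hmn W K Wstar Kstar hW0 hW1 hWs hKs
  set s := Icc (-(mn : ℤ)) mn
  have hKstar : 0 ≤ Kstar := (abs_nonneg _).trans (hKs 0 (by simp [s]))
  set G : ℤ → ℝ := fun k => ‖∑ j ∈ Icc 1 n, exp (↑((j : ℝ) * (k / n)) * I)‖ ^ 2
  have hexpand := sum_sum_norm_sum_mul_exp_sq (Icc 1 n) s (fun j => (j : ℝ))
    (fun m => W m * K m) (fun m => (m : ℝ) / n)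
  simp only [← sub_div, ← Int.cast_sub] at hexpand
  have ha : ∀ m ∈ s, |W m * K m| ≤ Kstar * W m := fun m hm => by
    rw [abs_mul, abs_of_nonneg (hW0 m hm), mul_comm]
    exact mul_le_mul_of_nonneg_right (hKs m hm) (hW0 m hm)
  have hw : ∀ m ∈ s, Kstar * W m ≤ Kstar * Wstar := fun m hm =>
    mul_le_mul_of_nonneg_left (hWs m hm) hKstar
  have hG0 : G 0 ≤ n ^ 2 := by simp [G]
  have hG : ∀ m ∈ s, ∀ m' ∈ s, m ≠ m' →
      G (m - m') ≤ π ^ 2 * n ^ 2 / ((m - m' : ℤ) : ℝ) ^ 2 := by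
    intro m hm m' hm' hne
    refine norm_sum_Icc_exp_mul_I_sq_le (sub_ne_zero.mpr hne) ?_
    simp only [s, mem_Icc] at hm hm'
    rw [abs_le]
    omega
  refine (Eq.trans ?_ hexpand).trans_le ?_
  · push_cast [mul_div_assoc]
    rfl
  calc _ ≤ Kstar * Wstar * (n ^ 2 + π ^ 2 * n ^ 2 * (π ^ 2 / 3)) * ∑ m ∈ s, Kstar * W m :=
        sum_sum_mul_mul_toeplitz_le (a := fun m => W m * K m) (G := G) ha hw
          (fun _ => by positivity) hG0 (by positivity) hG
    _ = (1 + π ^ 4 / 3) * Wstar * (Kstar * n) ^ 2 := by rw [← mul_sum, hW1]; ring
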